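/- Let φ be the standard normal density, u' > 0, v₀ ≥ 2, and ξ₀ ∈ [0, π/(2v₀)] be such that u'·sin(ξ₀ v₀) + 2ξ₀ v₀ ≤ π/4. Then ∫_{-v₀}^{v₀} e^{-u' cos(ξ₀ v)} cos(u' sin(ξ₀ v) - 2ξ₀ v) φ(v) dv ≥ (0.95/√2)·e^{-u'}. -/

import Mathlib

open Set MeasureTheory

/-- The standard normal density. -/
noncomputable def stdNormalDens (v : ℝ) : ℝ :=
  (Real.sqrt (2 * Real.pi))⁻¹ * Real.exp (-v ^ 2 / 2)


lemma nonneg_of_deriv (f f' : ℝ → ℝ) (hd : ∀ x, HasDerivAt f (f' x) x)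
    (h0 : f 0 = 0) (hf' : ∀ x, 0 ≤ x → 0 ≤ f' x) {x : ℝ} (hx : 0 ≤ x) : 0 ≤ f x := by
  have hm : MonotoneOn f (Ici 0) := by
    apply monotoneOn_of_deriv_nonneg (convex_Ici 0)
      (fun y _ => (hd y).continuousAt.continuousWithinAt)
      (fun y _ => (hd y).differentiableAt.differentiableWithinAt)
    intro y hy
    rw [interior_Ici] at hy
    rw [(hd y).deriv]
    exact hf' y hy.le
  have := hm (self_mem_Ici) hx hx
  linarith [h0 ▸ this]

lemma hasDerivAt_expNeg (y : ℝ) :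
    HasDerivAt (fun y : ℝ => Real.exp (-y)) (Real.exp (-y) * (-1)) y :=
  ((hasDerivAt_id y).neg).exp

lemma chain2 (x : ℝ) (hx : 0 ≤ x) : Real.exp (-x) ≤ 1 - x + x^2/2 := by
  have h : 0 ≤ 1 - x + x^2/2 - Real.exp (-x) := by
    apply nonneg_of_deriv _ (fun y => Real.exp (-y) - (1 - y)) _ (by norm_num) _ hx
    · intro y
      have h := (((hasDerivAt_const y (1:ℝ)).sub (hasDerivAt_id y)).add
        ((hasDerivAt_pow 2 y).div_const 2)).sub (hasDerivAt_expNeg y)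
      refine h.congr_deriv ?_
      push_cast
      ring
    · intro y hy
      have := Real.add_one_le_exp (-y)
      linarith
  linarith

lemma chain3 (x : ℝ) (hx : 0 ≤ x) : 1 - x + x^2/2 - x^3/6 ≤ Real.exp (-x) := by
  have h : 0 ≤ Real.exp (-x) - (1 - x + x^2/2 - x^3/6) := by
    apply nonneg_of_deriv _ (fun y => (1 - y + y^2/2) - Real.exp (-y)) _ (by norm_num) _ hx
    · intro y
      have h := (hasDerivAt_expNeg y).sub
        ((((hasDerivAt_const y (1:ℝ)).sub (hasDerivAt_id y)).add
          ((hasDerivAt_pow 2 y).div_const 2)).sub ((hasDerivAt_pow 3 y).div_const 6))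
      refine h.congr_deriv ?_
      push_cast
      ring
    · intro y hy
      have := chain2 y hy
      linarith
  linarith

lemma chain4 (x : ℝ) (hx : 0 ≤ x) :
    Real.exp (-x) ≤ 1 - x + x^2/2 - x^3/6 + x^4/24 := by
  have h : 0 ≤ 1 - x + x^2/2 - x^3/6 + x^4/24 - Real.exp (-x) := by
    apply nonneg_of_deriv _ (fun y => Real.exp (-y) - (1 - y + y^2/2 - y^3/6)) _
      (by norm_num) _ hx
    · intro y
      have h := (((((hasDerivAt_const y (1:ℝ)).sub (hasDerivAt_id y)).add
        ((hasDerivAt_pow 2 y).div_const 2)).sub ((hasDerivAt_pow 3 y).div_const 6)).add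
        ((hasDerivAt_pow 4 y).div_const 24)).sub (hasDerivAt_expNeg y)
      refine h.congr_deriv ?_
      push_cast
      ring
    · intro y hy
      have := chain3 y hy
      linarith
  linarith

lemma chain5 (x : ℝ) (hx : 0 ≤ x) :
    1 - x + x^2/2 - x^3/6 + x^4/24 - x^5/120 ≤ Real.exp (-x) := by
  have h : 0 ≤ Real.exp (-x) - (1 - x + x^2/2 - x^3/6 + x^4/24 - x^5/120) := by
    apply nonneg_of_deriv _
      (fun y => (1 - y + y^2/2 - y^3/6 + y^4/24) - Real.exp (-y)) _ (by norm_num) _ hx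
    · intro y
      have h := (hasDerivAt_expNeg y).sub
        ((((((hasDerivAt_const y (1:ℝ)).sub (hasDerivAt_id y)).add
          ((hasDerivAt_pow 2 y).div_const 2)).sub ((hasDerivAt_pow 3 y).div_const 6)).add
          ((hasDerivAt_pow 4 y).div_const 24)).sub ((hasDerivAt_pow 5 y).div_const 120))
      refine h.congr_deriv ?_
      push_cast
      ring
    · intro y hy
      have := chain4 y hy
      linarith
  linarith

lemma chain6 (x : ℝ) (hx : 0 ≤ x) :
    Real.exp (-x) ≤ 1 - x + x^2/2 - x^3/6 + x^4/24 - x^5/120 + x^6/720 := by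
  have h : 0 ≤ 1 - x + x^2/2 - x^3/6 + x^4/24 - x^5/120 + x^6/720 - Real.exp (-x) := by
    apply nonneg_of_deriv _
      (fun y => Real.exp (-y) - (1 - y + y^2/2 - y^3/6 + y^4/24 - y^5/120)) _
      (by norm_num) _ hx
    · intro y
      have h := (((((((hasDerivAt_const y (1:ℝ)).sub (hasDerivAt_id y)).add
        ((hasDerivAt_pow 2 y).div_const 2)).sub ((hasDerivAt_pow 3 y).div_const 6)).add
        ((hasDerivAt_pow 4 y).div_const 24)).sub ((hasDerivAt_pow 5 y).div_const 120)).add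
        ((hasDerivAt_pow 6 y).div_const 720)).sub (hasDerivAt_expNeg y)
      refine h.congr_deriv ?_
      push_cast
      ring
    · intro y hy
      have := chain5 y hy
      linarith
  linarith

lemma chain7 (x : ℝ) (hx : 0 ≤ x) :
    1 - x + x^2/2 - x^3/6 + x^4/24 - x^5/120 + x^6/720 - x^7/5040 ≤ Real.exp (-x) := by
  have h : 0 ≤ Real.exp (-x)
      - (1 - x + x^2/2 - x^3/6 + x^4/24 - x^5/120 + x^6/720 - x^7/5040) := by
    apply nonneg_of_deriv _
      (fun y => (1 - y + y^2/2 - y^3/6 + y^4/24 - y^5/120 + y^6/720) - Real.exp (-y)) _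
      (by norm_num) _ hx
    · intro y
      have h := (hasDerivAt_expNeg y).sub
        ((((((((hasDerivAt_const y (1:ℝ)).sub (hasDerivAt_id y)).add
          ((hasDerivAt_pow 2 y).div_const 2)).sub ((hasDerivAt_pow 3 y).div_const 6)).add
          ((hasDerivAt_pow 4 y).div_const 24)).sub ((hasDerivAt_pow 5 y).div_const 120)).add
          ((hasDerivAt_pow 6 y).div_const 720)).sub ((hasDerivAt_pow 7 y).div_const 5040))
      refine h.congr_deriv ?_
      push_cast
      ring
    · intro y hy
      have := chain6 y hy
      linarith
  linarith


lemma continuous_stdNormalDens : Continuous stdNormalDens := by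
  unfold stdNormalDens
  fun_prop

lemma stdNormalDens_nonneg (v : ℝ) : 0 ≤ stdNormalDens v := by
  unfold stdNormalDens
  positivity

lemma poly_le_gauss (v : ℝ) :
    1 - v^2/2 + v^4/8 - v^6/48 + v^8/384 - v^10/3840 + v^12/46080 - v^14/645120
      ≤ Real.exp (-v^2/2) := by
  have h := chain7 (v^2/2) (by positivity)
  have e1 : -(v^2/2) = -v^2/2 := by ring
  rw [e1] at h
  refine le_trans (le_of_eq ?_) h
  ring

lemma gauss_int_ge : (0.95 : ℝ) ≤ ∫ v in (-2:ℝ)..2, stdNormalDens v := by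
  set c : ℝ := (Real.sqrt (2 * Real.pi))⁻¹ with hc
  have hcpos : 0 < c := by
    rw [hc]
    have : 0 < Real.sqrt (2 * Real.pi) := Real.sqrt_pos.mpr (by positivity)
    positivity
  -- antiderivative
  have hF : ∀ x ∈ uIcc (-2:ℝ) 2, HasDerivAt
      (fun v : ℝ => v - v^3/6 + v^5/40 - v^7/336 + v^9/3456 - v^11/42240
        + v^13/599040 - v^15/9676800)
      (1 - x^2/2 + x^4/8 - x^6/48 + x^8/384 - x^10/3840 + x^12/46080 - x^14/645120) x := by
    intro x _
    have h := (((((((hasDerivAt_id x).sub ((hasDerivAt_pow 3 x).div_const 6)).add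
      ((hasDerivAt_pow 5 x).div_const 40)).sub ((hasDerivAt_pow 7 x).div_const 336)).add
      ((hasDerivAt_pow 9 x).div_const 3456)).sub ((hasDerivAt_pow 11 x).div_const 42240)).add
      ((hasDerivAt_pow 13 x).div_const 599040)).sub ((hasDerivAt_pow 15 x).div_const 9676800)
    refine h.congr_deriv ?_
    push_cast
    ring
  have hPint : IntervalIntegrable
      (fun x : ℝ => 1 - x^2/2 + x^4/8 - x^6/48 + x^8/384 - x^10/3840 + x^12/46080
        - x^14/645120) volume (-2) 2 := (by fun_prop : Continuous _).intervalIntegrable _ _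
  have hI : ∫ v in (-2:ℝ)..2,
      (1 - v^2/2 + v^4/8 - v^6/48 + v^8/384 - v^10/3840 + v^12/46080 - v^14/645120)
      = ((2:ℝ) - 2^3/6 + 2^5/40 - 2^7/336 + 2^9/3456 - 2^11/42240 + 2^13/599040
          - 2^15/9676800)
        - ((-2:ℝ) - (-2)^3/6 + (-2)^5/40 - (-2)^7/336 + (-2)^9/3456 - (-2)^11/42240
          + (-2)^13/599040 - (-2)^15/9676800) := by
    exact intervalIntegral.integral_eq_sub_of_hasDerivAt hF hPint
  have hmono : ∫ v in (-2:ℝ)..2,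
      c * (1 - v^2/2 + v^4/8 - v^6/48 + v^8/384 - v^10/3840 + v^12/46080 - v^14/645120)
      ≤ ∫ v in (-2:ℝ)..2, stdNormalDens v := by
    apply intervalIntegral.integral_mono_on (by norm_num)
      (hPint.const_mul c) (continuous_stdNormalDens.intervalIntegrable _ _)
    intro v _
    have := poly_le_gauss v
    unfold stdNormalDens
    rw [← hc]
    exact mul_le_mul_of_nonneg_left this hcpos.le
  rw [intervalIntegral.integral_const_mul, hI] at hmono
  -- numeric part
  have hsqrt : Real.sqrt (2 * Real.pi) ≤ 2.51 := by
    have h1 : (2 * Real.pi) ≤ 2.51^2 := by nlinarith [Real.pi_lt_d2]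
    calc Real.sqrt (2 * Real.pi) ≤ Real.sqrt (2.51^2) := Real.sqrt_le_sqrt h1
      _ = 2.51 := Real.sqrt_sq (by norm_num)
  have hcge : (2.51:ℝ)⁻¹ ≤ c := by
    rw [hc]
    exact inv_anti₀ (Real.sqrt_pos.mpr (by positivity)) hsqrt
  refine le_trans ?_ hmono
  have hS : ((2:ℝ) - 2^3/6 + 2^5/40 - 2^7/336 + 2^9/3456 - 2^11/42240 + 2^13/599040
          - 2^15/9676800)
        - ((-2:ℝ) - (-2)^3/6 + (-2)^5/40 - (-2)^7/336 + (-2)^9/3456 - (-2)^11/42240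
          + (-2)^13/599040 - (-2)^15/9676800) ≥ 2.3846 := by norm_num
  calc (0.95:ℝ) ≤ (2.51:ℝ)⁻¹ * 2.3846 := by norm_num
    _ ≤ c * _ := mul_le_mul hcge hS (by norm_num) hcpos.le

/-- central lower bound in the proof of Proposition 1. If `u' > 0`, `v₀ ≥ 2`,
`ξ₀ ∈ [0, π/(2v₀)]` and `u' sin(ξ₀ v₀) + 2 ξ₀ v₀ ≤ π/4`, then
`∫_{-v₀}^{v₀} e^{-u' cos(ξ₀ v)} cos(u' sin(ξ₀ v) - 2ξ₀ v) φ(v) dv ≥ (0.95/√2) e^{-u'}`. -/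
theorem stmt_11 (u' v₀ ξ₀ : ℝ) (hu' : 0 < u') (hv₀ : 2 ≤ v₀)
    (hξ₀ : ξ₀ ∈ Icc 0 (Real.pi / (2 * v₀)))
    (hphase : u' * Real.sin (ξ₀ * v₀) + 2 * ξ₀ * v₀ ≤ Real.pi / 4) :
    (0.95 / Real.sqrt 2) * Real.exp (-u')
      ≤ ∫ v in (-v₀)..v₀, Real.exp (-(u' * Real.cos (ξ₀ * v))) *
          Real.cos (u' * Real.sin (ξ₀ * v) - 2 * ξ₀ * v) * stdNormalDens v := by
  obtain ⟨hξ0, hξ1⟩ := hξ₀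
  have hπ := Real.pi_pos
  have hv0 : (0:ℝ) < v₀ := by linarith
  have habv : -v₀ ≤ v₀ := by linarith
  have hξv₀ : ξ₀ * v₀ ≤ Real.pi / 2 := by
    have h := mul_le_mul_of_nonneg_right hξ1 hv0.le
    have e : Real.pi / (2 * v₀) * v₀ = Real.pi / 2 := by field_simp
    linarith [e ▸ h]
  have hξv₀0 : 0 ≤ ξ₀ * v₀ := mul_nonneg hξ0 hv0.le
  have hsin₀ : 0 ≤ Real.sin (ξ₀ * v₀) :=
    Real.sin_nonneg_of_nonneg_of_le_pi hξv₀0 (by linarith)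
  have hs2 : Real.sqrt 2 * Real.sqrt 2 = 2 := Real.mul_self_sqrt (by norm_num)
  have hs2pos : (0:ℝ) < Real.sqrt 2 := Real.sqrt_pos.mpr (by norm_num)
  -- pointwise bound
  have hpoint : ∀ v ∈ Icc (-v₀) v₀,
      Real.exp (-u') * (Real.sqrt 2 / 2) * stdNormalDens v ≤
      Real.exp (-(u' * Real.cos (ξ₀ * v))) *
        Real.cos (u' * Real.sin (ξ₀ * v) - 2 * ξ₀ * v) * stdNormalDens v := by
    intro v hv
    have hvabs : |v| ≤ v₀ := abs_le.mpr ⟨hv.1, hv.2⟩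
    have hθ : |ξ₀ * v| ≤ ξ₀ * v₀ := by
      rw [abs_mul, abs_of_nonneg hξ0]
      exact mul_le_mul_of_nonneg_left hvabs hξ0
    have hθabs := abs_le.mp hθ
    have hsin : |Real.sin (ξ₀ * v)| ≤ Real.sin (ξ₀ * v₀) := by
      rw [abs_le]
      constructor
      · rw [← Real.sin_neg]
        exact Real.sin_le_sin_of_le_of_le_pi_div_two (by linarith) (by linarith)
          (by linarith)
      · exact Real.sin_le_sin_of_le_of_le_pi_div_two (by linarith) hξv₀ (by linarith)
    have hsins := abs_le.mp hsin
    have hvv := abs_le.mp hvabs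
    have harg : |u' * Real.sin (ξ₀ * v) - 2 * ξ₀ * v| ≤ Real.pi / 4 := by
      rw [abs_le]
      have h1 := mul_le_mul_of_nonneg_left hsins.2 hu'.le
      have h2 := mul_le_mul_of_nonneg_left hsins.1 hu'.le
      have h3 := mul_le_mul_of_nonneg_left hvv.2 hξ0
      have h4 := mul_le_mul_of_nonneg_left hvv.1 hξ0
      constructor <;> nlinarith
    have hcos : Real.sqrt 2 / 2 ≤ Real.cos (u' * Real.sin (ξ₀ * v) - 2 * ξ₀ * v) := by
      rw [← Real.cos_pi_div_four, ← Real.cos_abs (u' * Real.sin (ξ₀ * v) - 2 * ξ₀ * v)]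
      exact Real.cos_le_cos_of_nonneg_of_le_pi (abs_nonneg _) (by linarith) harg
    have hexp : Real.exp (-u') ≤ Real.exp (-(u' * Real.cos (ξ₀ * v))) := by
      apply Real.exp_le_exp.mpr
      nlinarith [Real.cos_le_one (ξ₀ * v)]
    have h1 : Real.exp (-u') * (Real.sqrt 2 / 2) ≤
        Real.exp (-(u' * Real.cos (ξ₀ * v))) *
          Real.cos (u' * Real.sin (ξ₀ * v) - 2 * ξ₀ * v) :=
      mul_le_mul hexp hcos (by positivity) (Real.exp_pos _).le
    exact mul_le_mul_of_nonneg_right h1 (stdNormalDens_nonneg v)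
  -- integrability
  have hIntBig : IntervalIntegrable
      (fun v => Real.exp (-(u' * Real.cos (ξ₀ * v))) *
        Real.cos (u' * Real.sin (ξ₀ * v) - 2 * ξ₀ * v) * stdNormalDens v)
      volume (-v₀) v₀ := by
    apply Continuous.intervalIntegrable
    have hc := continuous_stdNormalDens
    fun_prop
  have hIntSm : IntervalIntegrable
      (fun v => Real.exp (-u') * (Real.sqrt 2 / 2) * stdNormalDens v) volume (-v₀) v₀ :=
    by
    apply Continuous.intervalIntegrable
    have hc := continuous_stdNormalDens
    fun_prop
  have hstep1 : ∫ v in (-v₀)..v₀, Real.exp (-u') * (Real.sqrt 2 / 2) * stdNormalDens v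
      ≤ ∫ v in (-v₀)..v₀, Real.exp (-(u' * Real.cos (ξ₀ * v))) *
          Real.cos (u' * Real.sin (ξ₀ * v) - 2 * ξ₀ * v) * stdNormalDens v :=
    intervalIntegral.integral_mono_on habv hIntSm hIntBig hpoint
  have hstep2 : ∫ v in (-2:ℝ)..2, stdNormalDens v
      ≤ ∫ v in (-v₀)..v₀, stdNormalDens v :=
    intervalIntegral.integral_mono_interval (by linarith) (by norm_num) (by linarith)
      (Filter.Eventually.of_forall stdNormalDens_nonneg)
      (continuous_stdNormalDens.intervalIntegrable _ _)
  have hconst : ∫ v in (-v₀)..v₀, Real.exp (-u') * (Real.sqrt 2 / 2) * stdNormalDens v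
      = (Real.exp (-u') * (Real.sqrt 2 / 2)) * ∫ v in (-v₀)..v₀, stdNormalDens v :=
    intervalIntegral.integral_const_mul _ _
  have hcoef : (0:ℝ) ≤ Real.exp (-u') * (Real.sqrt 2 / 2) := by positivity
  have hkey : (0.95 / Real.sqrt 2) * Real.exp (-u')
      ≤ ∫ v in (-v₀)..v₀, Real.exp (-u') * (Real.sqrt 2 / 2) * stdNormalDens v := by
    rw [hconst]
    have heq : (0.95 / Real.sqrt 2) * Real.exp (-u')
        = (Real.exp (-u') * (Real.sqrt 2 / 2)) * 0.95 := by
      field_simp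
      nlinarith [Real.exp_pos (-u')]
    rw [heq]
    exact mul_le_mul_of_nonneg_left (le_trans gauss_int_ge hstep2) hcoef
  linarith
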